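/- arXiv:1902.09565 — 6 statements merged into one kernel-verified Lean document; each statement's English description precedes it below -/
import Mathlib

section
/- Let E be a finite set of pairwise-crossing pseudo-lines, ordered by their values at a point x₀ left of all crossings (f ≤ g iff f(x₀) ≤ g(x₀)). If f < g in this order and both f and g attain the lower envelope L (i.e., f(a) = L(a) and g(b) = L(b) for some a, b), then every point a where f attains L and lies strictly below g satisfies a < b' for every point b' where g attains L and lies strictly below f. (Property B: segments of the lower envelope appear in the order ≤.) -/
/-- Property B: with `E` ordered by values at `x₀` left of all crossings, if `f` is below
`g` at `x₀`, then any point where `f` attains the lower envelope strictly below `g`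
lies strictly to the left of any point where `g` attains the envelope strictly below `f`. -/
theorem stmt_4 (E : Finset (ℝ → ℝ)) (hE : E.Nonempty) (x₀ : ℝ)
    (hcont : ∀ f ∈ E, Continuous f)
    (hcross : ∀ f ∈ E, ∀ g ∈ E, f ≠ g → ∃ c, x₀ < c ∧
      (∀ x, f x = g x ↔ x = c) ∧ (∃ a, f a < g a) ∧ (∃ b, g b < f b))
    (f g : ℝ → ℝ) (hfE : f ∈ E) (hgE : g ∈ E) (hfg : f x₀ < g x₀) :
    ∀ a, f a = (E.inf' hE fun h => h a) → f a < g a →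
      ∀ b, g b = (E.inf' hE fun h => h b) → g b < f b → a < b := by
  intro a _ hfga b _ hgfb
  by_contra hab
  push_neg at hab
  have hne : f ≠ g := fun h => by rw [h] at hfg; exact lt_irrefl _ hfg
  obtain ⟨c, hx0c, hiff, -, -⟩ := hcross f hfE g hgE hne
  set d : ℝ → ℝ := f - g with hd_def
  have hd : Continuous d := (hcont f hfE).sub (hcont g hgE)
  have hzero : ∀ x, d x = 0 ↔ x = c := by
    intro x; simp [hd_def, sub_eq_zero, hiff x]
  have hda : d a < 0 := by simpa [hd_def, sub_neg] using hfga
  have hdb : 0 < d b := by simpa [hd_def, sub_pos] using hgfb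
  have hdx0 : d x₀ < 0 := by simpa [hd_def, sub_neg] using hfg
  have hba : b < a := lt_of_le_of_ne hab (by
    rintro rfl; exact absurd hfga (not_lt.2 hgfb.le))
  -- crossing in (b, a)
  have h1 : ∃ x ∈ Set.Icc b a, d x = 0 := by
    have := intermediate_value_Icc' hba.le hd.continuousOn
      (Set.mem_Icc.2 ⟨hda.le, hdb.le⟩)
    obtain ⟨x, hx, hx0⟩ := this
    exact ⟨x, hx, hx0⟩
  obtain ⟨x, hx, hx0⟩ := h1
  have hxc : x = c := (hzero x).1 hx0
  have hbc : b < c := hxc ▸ lt_of_le_of_ne hx.1 (by rintro rfl; exact absurd hx0 hdb.ne')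
  -- now a crossing between x₀ and b, contradiction
  rcases le_or_gt x₀ b with h | h
  · obtain ⟨y, hy, hy0⟩ := intermediate_value_Icc h hd.continuousOn
      (Set.mem_Icc.2 ⟨hdx0.le, hdb.le⟩)
    have hyc : y = c := (hzero y).1 hy0
    exact absurd (hyc ▸ hy.2) (not_le.2 hbc)
  · obtain ⟨y, hy, hy0⟩ := intermediate_value_Icc' h.le hd.continuousOn
      (Set.mem_Icc.2 ⟨hdx0.le, hdb.le⟩)
    have hyc : y = c := (hzero y).1 hy0
    exact absurd (hyc ▸ hy.2) (not_le.2 hx0c)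
end

section
/- With E_ℓ, E_r as in the two-envelope setting (every pseudo-line of E_ℓ below every pseudo-line of E_r near -∞), the set {x : L_ℓ(x) ≤ L_r(x)} is an interval of the form (-∞, q]; in particular the envelopes L_ℓ and L_r cross exactly once: there is a unique q with L_ℓ(q) = L_r(q), L_ℓ < L_r on (-∞, q), and L_r < L_ℓ on (q, ∞). -/
open Filter Topology

private lemma cont_inf' (s : Finset (ℝ → ℝ)) (hs : s.Nonempty)
    :
    (∀ f ∈ s, Continuous f) → Continuous (fun x => s.inf' hs fun f => f x) := by
  induction hs using Finset.Nonempty.cons_induction with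
  | singleton f =>
    intro h
    have he : (fun x => ({f} : Finset (ℝ → ℝ)).inf' (Finset.singleton_nonempty f) fun g => g x)
        = f := by ext x; rw [Finset.inf'_singleton]
    rw [he]; exact h f (by simp)
  | cons f s hf hs ih =>
    intro h
    have he : (fun x => (Finset.cons f s hf).inf' (Finset.cons_nonempty hf) fun g => g x)
        = fun x => min (f x) (s.inf' hs fun g => g x) := by
      ext x; rw [Finset.inf'_cons]
    rw [he]
    exact (h f (by simp)).min (ih fun g hg => h g (Finset.mem_cons_of_mem hg))

/-- Two-envelope setting: the set `{x : Lℓ x ≤ Lr x}` is `(-∞, q]` and the envelopes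
cross exactly once: unique `q` with `Lℓ q = Lr q`, `Lℓ < Lr` left of `q`,
`Lr < Lℓ` right of `q`. -/
theorem stmt_7 (El Er : Finset (ℝ → ℝ)) (hEl : El.Nonempty) (hEr : Er.Nonempty)
    (hcont : ∀ f, f ∈ El ∨ f ∈ Er → Continuous f)
    (hcross : ∀ f g, (f ∈ El ∨ f ∈ Er) → (g ∈ El ∨ g ∈ Er) → f ≠ g → ∃ c,
      (∀ x, f x = g x ↔ x = c) ∧ (∃ a, f a < g a) ∧ (∃ b, g b < f b))
    (hbelow : ∀ f ∈ El, ∀ g ∈ Er, ∃ c, f c = g c ∧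
      (∀ x < c, f x < g x) ∧ (∀ x > c, g x < f x)) :
    ∃ q, {x | (El.inf' hEl fun f => f x) ≤ Er.inf' hEr fun g => g x} = Set.Iic q ∧
      (El.inf' hEl fun f => f q) = (Er.inf' hEr fun g => g q) ∧
      (∀ x < q, (El.inf' hEl fun f => f x) < Er.inf' hEr fun g => g x) ∧
      (∀ x > q, (Er.inf' hEr fun g => g x) < El.inf' hEl fun f => f x) ∧
      (∀ q', (El.inf' hEl fun f => f q') = (Er.inf' hEr fun g => g q') → q' = q) := by
  classical
  set Ll : ℝ → ℝ := fun x => El.inf' hEl fun f => f x with hLl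
  set Lr : ℝ → ℝ := fun x => Er.inf' hEr fun g => g x with hLr
  have hcLl : Continuous Ll := cont_inf' El hEl fun f hf => hcont f (Or.inl hf)
  have hcLr : Continuous Lr := cont_inf' Er hEr fun g hg => hcont g (Or.inr hg)
  -- key propagation lemma
  have key : ∀ x y, x < y → Ll y ≤ Lr y → Ll x < Lr x := by
    intro x y hxy hle
    obtain ⟨g, hg, hgx⟩ := Er.exists_mem_eq_inf' hEr fun g => g x
    obtain ⟨f, hf, hfy⟩ := El.exists_mem_eq_inf' hEl fun f => f y
    obtain ⟨c, _, hlt, hgt⟩ := hbelow f hf g hg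
    have hfgy : f y ≤ g y := by
      calc f y = Ll y := hfy.symm
        _ ≤ Lr y := hle
        _ ≤ g y := Finset.inf'_le _ hg
    have hyc : y ≤ c := by
      by_contra h
      exact absurd hfgy (not_le.mpr (hgt y (lt_of_not_ge h)))
    have hx : f x < g x := hlt x (lt_of_lt_of_le hxy hyc)
    calc Ll x ≤ f x := Finset.inf'_le _ hf
      _ < g x := hx
      _ = Lr x := hgx.symm
  -- choice of crossings
  have cfun : ∀ p : (ℝ → ℝ) × (ℝ → ℝ), ∃ c : ℝ, p.1 ∈ El → p.2 ∈ Er →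
      p.1 c = p.2 c ∧ (∀ x < c, p.1 x < p.2 x) ∧ (∀ x > c, p.2 x < p.1 x) := by
    rintro ⟨f, g⟩
    by_cases h : f ∈ El ∧ g ∈ Er
    · obtain ⟨c, hc⟩ := hbelow f h.1 g h.2
      exact ⟨c, fun _ _ => hc⟩
    · exact ⟨0, fun h1 h2 => absurd ⟨h1, h2⟩ h⟩
  choose cc hcc using cfun
  have hprod : (El ×ˢ Er).Nonempty := hEl.product hEr
  -- a point where Ll < Lr
  obtain ⟨a, ha⟩ : ∃ a, Ll a < Lr a := by
    set a := (El ×ˢ Er).inf' hprod cc - 1 with hadef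
    refine ⟨a, ?_⟩
    obtain ⟨g, hg, hgx⟩ := Er.exists_mem_eq_inf' hEr fun g => g a
    obtain ⟨f, hf⟩ := hEl
    have hfa : f a < g a := by
      have := (hcc (f, g) hf hg).2.1
      apply this
      have : (El ×ˢ Er).inf' hprod cc ≤ cc (f, g) :=
        Finset.inf'_le _ (Finset.mem_product.mpr ⟨hf, hg⟩)
      linarith [hadef ▸ (by linarith : a < (El ×ˢ Er).inf' hprod cc)]
    calc Ll a ≤ f a := Finset.inf'_le _ hf
      _ < g a := hfa
      _ = Lr a := hgx.symm
  -- a point where Lr < Ll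
  obtain ⟨b, hb⟩ : ∃ b, Lr b < Ll b := by
    set b := (El ×ˢ Er).sup' hprod cc + 1 with hbdef
    refine ⟨b, ?_⟩
    obtain ⟨f, hf, hfx⟩ := El.exists_mem_eq_inf' hEl fun f => f b
    obtain ⟨g, hg⟩ := hEr
    have hgb : g b < f b := by
      have := (hcc (f, g) hf hg).2.2
      apply this
      have : cc (f, g) ≤ (El ×ˢ Er).sup' hprod cc :=
        Finset.le_sup' _ (Finset.mem_product.mpr ⟨hf, hg⟩)
      linarith
    calc Lr b ≤ g b := Finset.inf'_le _ hg
      _ < f b := hgb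
      _ = Ll b := hfx.symm
  set S := {x | Ll x ≤ Lr x} with hS
  have hSa : a ∈ S := le_of_lt ha
  have hSbdd : BddAbove S := by
    refine ⟨b, fun x hx => ?_⟩
    by_contra h
    exact absurd (key b x (lt_of_not_ge h) hx) (not_lt.mpr (le_of_lt hb))
  have hSclosed : IsClosed S := isClosed_le hcLl hcLr
  set q := sSup S with hq
  have hqS : q ∈ S := hSclosed.csSup_mem ⟨a, hSa⟩ hSbdd
  have hleft : ∀ x < q, Ll x < Lr x := fun x hx => key x q hx hqS
  have hSiic : S = Set.Iic q := by
    ext x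
    constructor
    · intro hx; exact le_csSup hSbdd hx
    · intro hx
      rcases lt_or_eq_of_le (Set.mem_Iic.mp hx) with h | h
      · exact le_of_lt (hleft x h)
      · exact h ▸ hqS
  have hright : ∀ x > q, Lr x < Ll x := by
    intro x hx
    have hx' : x ∉ S := by rw [hSiic]; exact not_le.mpr hx
    have : ¬ Ll x ≤ Lr x := hx'
    exact not_le.mp this
  have heq : Ll q = Lr q := by
    have hqS' : Ll q ≤ Lr q := hqS
    rcases lt_or_eq_of_le hqS' with h | h
    · exfalso
      have hpos : 0 < (Lr - Ll) q := by simpa using sub_pos.mpr h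
      have hev : ∀ᶠ x in 𝓝 q, 0 < (Lr - Ll) x :=
        ((hcLr.sub hcLl).continuousAt (x := q)).eventually (eventually_gt_nhds hpos)
      obtain ⟨x, hx1, hx2⟩ :=
        ((hev.filter_mono nhdsWithin_le_nhds).and self_mem_nhdsWithin).exists
          (f := 𝓝[>] q)
      have := hright x hx2
      simp only [Pi.sub_apply] at hx1
      linarith
    · exact h
  refine ⟨q, hSiic, heq, hleft, hright, ?_⟩
  intro q' hq'
  by_contra h
  rcases lt_or_gt_of_ne h with h | h
  · exact absurd hq' (ne_of_lt (hleft q' h))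
  · exact absurd hq'.symm (ne_of_lt (hright q' h))
end

section
/- In the two-envelope setting, let u.p = (x_u, y_u) be a point on L_ℓ and v.p = (x_v, y_v) a point on L_r. If y_u < L_r(x_u) and y_v < L_ℓ(x_v), then x_u < x_v. -/
/-- Two-envelope setting, Case 3: a point of `Lℓ` strictly below `Lr` lies strictly to
the left of any point of `Lr` strictly below `Lℓ`. -/
theorem stmt_9 (El Er : Finset (ℝ → ℝ)) (hEl : El.Nonempty) (hEr : Er.Nonempty)
    (hcont : ∀ f, f ∈ El ∨ f ∈ Er → Continuous f)
    (hbelow : ∀ f ∈ El, ∀ g ∈ Er, ∃ c, f c = g c ∧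
      (∀ x < c, f x < g x) ∧ (∀ x > c, g x < f x))
    (x_u x_v : ℝ)
    (hu : (El.inf' hEl fun f => f x_u) < Er.inf' hEr fun g => g x_u)
    (hv : (Er.inf' hEr fun g => g x_v) < El.inf' hEl fun f => f x_v) :
    x_u < x_v := by
  obtain ⟨f, hf, hfeq⟩ := El.exists_mem_eq_inf' hEl (fun f => f x_u)
  obtain ⟨g, hg, hgeq⟩ := Er.exists_mem_eq_inf' hEr (fun g => g x_v)
  have h1 : f x_u < g x_u := by
    have := Finset.inf'_le (fun g => g x_u) hg
    calc f x_u = _ := hfeq.symm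
    _ < _ := hu
    _ ≤ g x_u := this
  have h2 : g x_v < f x_v := by
    have := Finset.inf'_le (fun f => f x_v) hf
    calc g x_v = _ := hgeq.symm
    _ < _ := hv
    _ ≤ f x_v := this
  obtain ⟨c, hc, hlt, hgt⟩ := hbelow f hf g hg
  have hu' : x_u < c := by
    by_contra h
    push_neg at h
    rcases eq_or_lt_of_le h with h | h
    · rw [h] at hc; linarith
    · exact absurd h1 (not_lt.2 (le_of_lt (hgt _ h)))
  have hv' : c < x_v := by
    by_contra h
    push_neg at h
    rcases eq_or_lt_of_le h with h | h
    · rw [← h] at hc; linarith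
    · exact absurd h2 (not_lt.2 (le_of_lt (hlt _ h)))
  linarith
end

section
/- Let E be a finite set of n ≥ 1 pairwise-crossing pseudo-lines. Then the lower envelope L of E consists of at most n maximal pieces; equivalently, the function x ↦ (the minimal pseudo-line attaining L at x, in the left-to-right order) is monotone non-decreasing, and hence changes value at most n - 1 times. -/
/-- If `h` is continuous with unique zero `c`, then `h` has constant sign on any
interval not containing `c`. -/
lemma same_sign_aux {h : ℝ → ℝ} {c : ℝ} (hc : Continuous h)
    (hz : ∀ t, h t = 0 ↔ t = c) {u v : ℝ} (hcn : c ∉ Set.uIcc u v)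
    (hup : 0 < h u) : 0 < h v := by
  have hvne : h v ≠ 0 := by
    intro e
    exact hcn (by rw [(hz v).mp e] at hcn ⊢; exact Set.right_mem_uIcc)
  rcases lt_or_gt_of_ne hvne with hneg | hpos
  · have : (0 : ℝ) ∈ Set.uIcc (h v) (h u) := by
      rw [Set.mem_uIcc]; left; exact ⟨hneg.le, hup.le⟩
    obtain ⟨z, hz1, hz2⟩ := intermediate_value_uIcc (a := v) (b := u)
      hc.continuousOn this
    have : z = c := (hz z).mp hz2
    rw [this, Set.uIcc_comm] at hz1
    exact absurd hz1 hcn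
  · exact hpos

/-- Let `E` be a finite nonempty set of pairwise-crossing pseudo-lines, ordered by
their values at `x₀` left of all crossings, with lower envelope `L`. If `m x` denotes
the `≤`-minimal pseudo-line of `E` attaining `L` at `x`, then `m` is monotone
non-decreasing with respect to the order on `E` (i.e., `x ↦ m x x₀` is monotone). -/
theorem stmt_11 (E : Finset (ℝ → ℝ)) (hE : E.Nonempty) (x₀ : ℝ)
    (hcont : ∀ f ∈ E, Continuous f)
    (hcross : ∀ f ∈ E, ∀ g ∈ E, f ≠ g → ∃ c, x₀ < c ∧
      (∀ x, f x = g x ↔ x = c) ∧ (∃ a, f a < g a) ∧ (∃ b, g b < f b))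
    (m : ℝ → ℝ → ℝ)
    (hm : ∀ x, m x ∈ E ∧ m x x = (E.inf' hE fun f => f x) ∧
      ∀ f ∈ E, f x = (E.inf' hE fun f => f x) → m x x₀ ≤ f x₀) :
    Monotone fun x => m x x₀ := by
  intro x y hxy
  by_contra hlt'
  push_neg at hlt'
  obtain ⟨hfE, hfL, hfmin⟩ := hm x
  obtain ⟨hgE, hgL, hgmin⟩ := hm y
  have hne : m x ≠ m y := by
    intro e; rw [e] at hlt'; exact lt_irrefl _ hlt'
  obtain ⟨c, hc0, hcz, ⟨a, ha⟩, ⟨b, hb⟩⟩ := hcross _ hfE _ hgE hne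
  -- h = m x - m y
  have hcontf : Continuous (m x) := hcont _ hfE
  have hcontg : Continuous (m y) := hcont _ hgE
  have hcdiff : Continuous fun t => m x t - m y t := hcontf.sub hcontg
  have hcdiff' : Continuous fun t => m y t - m x t := hcontg.sub hcontf
  have hz : ∀ t, m x t - m y t = 0 ↔ t = c := by
    intro t; rw [sub_eq_zero]; exact hcz t
  have hz' : ∀ t, m y t - m x t = 0 ↔ t = c := by
    intro t; rw [sub_eq_zero, eq_comm]; exact hcz t
  have hx₀pos : 0 < m x x₀ - m y x₀ := sub_pos.mpr hlt'
  have hapos : 0 < m y a - m x a := sub_pos.mpr ha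
  -- a > c : otherwise a and x₀ on same side
  have hac : c < a := by
    by_contra hle
    push_neg at hle
    have hane : a ≠ c := by
      intro e
      have := (hcz a).mpr e
      rw [this] at ha; exact lt_irrefl _ ha
    have halt : a < c := lt_of_le_of_ne hle hane
    have hcn : c ∉ Set.uIcc x₀ a := by
      rw [Set.mem_uIcc]
      push_neg
      exact ⟨fun _ => halt, fun _ => hc0⟩
    have := same_sign_aux hcdiff hz hcn hx₀pos
    linarith
  -- c ≤ x
  have hcx : c ≤ x := by
    by_contra hlt
    push_neg at hlt
    have hcn : c ∉ Set.uIcc x₀ x := by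
      rw [Set.mem_uIcc]
      push_neg
      exact ⟨fun _ => hlt, fun _ => hc0⟩
    have hpos := same_sign_aux hcdiff hz hcn hx₀pos
    have hinf : m x x ≤ m y x := by
      rw [hfL]; exact Finset.inf'_le _ hgE
    linarith
  -- y ≤ c
  have hyc : y ≤ c := by
    by_contra hlt
    push_neg at hlt
    have hcn : c ∉ Set.uIcc a y := by
      rw [Set.mem_uIcc]
      push_neg
      exact ⟨fun h1 => absurd h1 (not_le.mpr hac),
             fun h1 => absurd h1 (not_le.mpr hlt)⟩
    have hpos := same_sign_aux hcdiff' hz' hcn hapos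
    have hinf : m y y ≤ m x y := by
      rw [hgL]; exact Finset.inf'_le _ hfE
    linarith
  -- so x = y = c
  have hxc : x = c := le_antisymm (hxy.trans hyc) hcx
  have heq : m x x = m y x := (hcz x).mpr hxc
  have hgval : m y x = (E.inf' hE fun f => f x) := heq ▸ hfL
  have := hfmin (m y) hgE hgval
  linarith
end

section
/- Let f, g, h be three pairwise-crossing pseudo-lines with f < g < h in the order at -∞ (each is below the next to the left of all pairwise crossings). If the crossing point of f and h lies to the left of the crossing point of f and g, then g does not appear on the lower envelope of {f, g, h}: for all x, min(f(x), h(x)) ≤ g(x). -/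
/-- Three pairwise-crossing pseudo-lines `f < g < h` at `-∞`: if the crossing of `f`
and `h` lies at or to the left of the crossing of `f` and `g`, then `g` never appears
on the lower envelope of `{f, g, h}`: `min (f x) (h x) ≤ g x` for all `x`. -/
theorem stmt_12 (f g h : ℝ → ℝ) (cfg cfh cgh : ℝ)
    (hf : Continuous f) (hg : Continuous g) (hh : Continuous h)
    (hfg : f cfg = g cfg ∧ (∀ x < cfg, f x < g x) ∧ ∀ x > cfg, g x < f x)
    (hfh : f cfh = h cfh ∧ (∀ x < cfh, f x < h x) ∧ ∀ x > cfh, h x < f x)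
    (hgh : g cgh = h cgh ∧ (∀ x < cgh, g x < h x) ∧ ∀ x > cgh, h x < g x)
    (horder : cfh ≤ cfg) :
    ∀ x, min (f x) (h x) ≤ g x := by
  have hcgh : cgh ≤ cfg := by
    rcases lt_or_eq_of_le horder with hlt | heq
    · -- pick x in (cfh, cfg)
      set x := (cfh + cfg) / 2 with hx
      have h1 : cfh < x := by simp [hx]; linarith
      have h2 : x < cfg := by simp [hx]; linarith
      have hhf : h x < f x := hfh.2.2 x h1
      have hfg' : f x < g x := hfg.2.1 x h2
      by_contra hc
      push_neg at hc
      have : g x < h x := hgh.2.1 x (by linarith)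
      linarith
    · -- cfh = cfg, so g cfg = h cfg, so cgh = cfg
      have : g cfg = h cfg := by rw [← hfg.1, ← heq, hfh.1, heq]
      rcases lt_trichotomy cfg cgh with hlt | heq' | hgt
      · have := hgh.2.1 cfg hlt; linarith
      · exact le_of_eq heq'.symm
      · have := hgh.2.2 cfg hgt; linarith
  intro x
  rcases lt_trichotomy x cfg with hlt | heq | hgt
  · exact le_trans (min_le_left _ _) (le_of_lt (hfg.2.1 x hlt))
  · exact le_trans (min_le_left _ _) (le_of_eq (heq ▸ hfg.1))
  · exact le_trans (min_le_right _ _) (le_of_lt (hgh.2.2 x (lt_of_le_of_lt hcgh hgt)))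
end

section
/- In the two-envelope setting, let q be the unique intersection of L_ℓ and L_r and suppose the segment of L_ℓ containing q is supported by pseudo-line e_u ∈ E_ℓ (i.e., e_u(q) = L_ℓ(q) = L_r(q)). Then no point of L_r strictly left of q lies on or below e_u: for all x < q, L_r(x) > e_u(x). -/
/-- Two-envelope setting with unique envelope intersection `q`: if `e_u ∈ Eℓ` supports
`Lℓ` at `q` (i.e. `e_u q = Lℓ q = Lr q`), then no point of `Lr` strictly left of `q`
lies on or below `e_u`: for all `x < q`, `Lr x > e_u x`. -/
theorem stmt_13 (El Er : Finset (ℝ → ℝ)) (hEl : El.Nonempty) (hEr : Er.Nonempty)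
    (hcont : ∀ f, f ∈ El ∨ f ∈ Er → Continuous f)
    (hbelow : ∀ f ∈ El, ∀ g ∈ Er, ∃ c, f c = g c ∧
      (∀ x < c, f x < g x) ∧ (∀ x > c, g x < f x))
    (q : ℝ)
    (hq : (El.inf' hEl fun f => f q) = (Er.inf' hEr fun g => g q))
    (hql : ∀ x < q, (El.inf' hEl fun f => f x) < Er.inf' hEr fun g => g x)
    (hqr : ∀ x > q, (Er.inf' hEr fun g => g x) < El.inf' hEl fun f => f x)
    (e_u : ℝ → ℝ) (heu : e_u ∈ El)
    (hsupp : e_u q = El.inf' hEl fun f => f q) :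
    ∀ x < q, e_u x < Er.inf' hEr fun g => g x := by
  intro x hx
  rw [Finset.lt_inf'_iff]
  intro g hg
  obtain ⟨c, hc, hlt, hgt⟩ := hbelow e_u heu g hg
  have hcq : q ≤ c := by
    by_contra h
    push_neg at h
    have h1 := hgt q h
    have h2 : (Er.inf' hEr fun g => g q) ≤ g q := Finset.inf'_le _ hg
    rw [← hq, ← hsupp] at h2
    linarith
  exact hlt x (lt_of_lt_of_le hx hcq)
end
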